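/- arXiv:2401.07925 — 2 statements merged into one kernel-verified Lean document; each statement's English description precedes it below -/
import Mathlib

section
/- Let p be an odd prime. For all x₁, x₂, x₃ ∈ F_p, p^{-4} ∑_{x₄ ∈ F_p} ∑_{y₁,y₂,y₃,y₄ ∈ F_p} e_p(Q₁) = p^{-3} ∑_{y₁,y₂,y₃ ∈ F_p} e_p(R₁), where Q₁ = x₁y₁² + (x₂+x₄−x₁)y₁ − x₂y₂² − x₄y₂ − x₃y₃² − (x₂+x₄−x₁)y₃ + (x₃+x₂−x₁)y₄² + x₄y₄ and R₁ = x₁y₁² − x₂y₂² − x₃y₃² + (x₃+x₂−x₁)(y₂+y₃−y₁)² + (x₂−x₁)(y₁−y₃). -/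
open Finset Complex

/-- `e_p(x) = exp(-2πi x / p)` via the canonical lift `x.val`. -/
noncomputable def ep (p : ℕ) (x : ZMod p) : ℂ :=
  Complex.exp (-2 * Real.pi * Complex.I * (x.val : ℂ) / p)

/-- Normalized quadratic Gauss sum kernel `K(a,b) = (1/p) ∑_y e_p(a y² + b y)`. -/
noncomputable def Kker (p : ℕ) [NeZero p] (a b : ZMod p) : ℂ :=
  (p : ℂ)⁻¹ * ∑ y : ZMod p, ep p (a * y ^ 2 + b * y)

private lemma ep_eq_pow (p : ℕ) (x : ZMod p) :
    ep p x = Complex.exp (-2 * Real.pi * Complex.I / p) ^ x.val := by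
  rw [ep, ← Complex.exp_nat_mul]
  congr 1
  ring

private lemma zeta_pow (p : ℕ) (hp : p ≠ 0) :
    Complex.exp (-2 * Real.pi * Complex.I / p) ^ p = 1 := by
  rw [← Complex.exp_nat_mul]
  have hpC : (p : ℂ) ≠ 0 := Nat.cast_ne_zero.mpr hp
  have : (p : ℂ) * (-2 * Real.pi * Complex.I / p) = (-1 : ℤ) * (2 * Real.pi * Complex.I) := by
    field_simp
    ring
  rw [this]
  exact Complex.exp_int_mul_two_pi_mul_I (-1)

private lemma ep_nat (p : ℕ) [NeZero p] (n : ℕ) :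
    ep p ((n : ZMod p)) = Complex.exp (-2 * Real.pi * Complex.I / p) ^ n := by
  rw [ep_eq_pow, ZMod.val_natCast]
  conv_rhs => rw [← Nat.mod_add_div n p]
  rw [pow_add, pow_mul, zeta_pow p (NeZero.ne p), one_pow, mul_one]

private lemma ep_add (p : ℕ) [NeZero p] (a b : ZMod p) :
    ep p (a + b) = ep p a * ep p b := by
  have h : a + b = ((a.val + b.val : ℕ) : ZMod p) := by
    push_cast [ZMod.natCast_val, ZMod.cast_id]
    rfl
  rw [h, ep_nat, pow_add, ← ep_eq_pow, ← ep_eq_pow]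

private lemma ep_zero (p : ℕ) : ep p 0 = 1 := by
  simp [ep]

private lemma zeta_ne_one (p : ℕ) (hp : 1 < p) :
    Complex.exp (-2 * Real.pi * Complex.I / p) ≠ 1 := by
  intro h
  rw [Complex.exp_eq_one_iff] at h
  obtain ⟨n, hn⟩ := h
  have hpC : (p : ℂ) ≠ 0 := Nat.cast_ne_zero.mpr (by omega)
  have hπ : (2 : ℂ) * Real.pi * Complex.I ≠ 0 := by
    simp [Real.pi_ne_zero, Complex.I_ne_zero]
  field_simp at hn
  have h2 : ((n * p : ℤ) : ℂ) * (2 * Real.pi * Complex.I)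
      = ((-1 : ℤ) : ℂ) * (2 * Real.pi * Complex.I) := by
    push_cast
    linear_combination (-(2 * Real.pi * Complex.I)) * hn
  have h4 := mul_right_cancel₀ hπ h2
  have hnp : (n * p : ℤ) = -1 := by exact_mod_cast h4
  have hdvd : (p : ℤ) ∣ 1 := ⟨-n, by linarith⟩
  have := Int.le_of_dvd one_pos hdvd
  omega

private lemma sum_ep (p : ℕ) (hp : 1 < p) [NeZero p] :
    ∑ x : ZMod p, ep p x = 0 := by
  have h : ∑ x : ZMod p, ep p x
      = ∑ i ∈ Finset.range p, Complex.exp (-2 * Real.pi * Complex.I / p) ^ i := by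
    refine Finset.sum_nbij' (fun x => x.val) (fun i => (i : ZMod p)) ?_ ?_ ?_ ?_ ?_
    · intro x _; exact Finset.mem_range.mpr (ZMod.val_lt x)
    · intro i _; exact Finset.mem_univ _
    · intro x _; simp [ZMod.natCast_val, ZMod.cast_id]
    · intro i hi; exact ZMod.val_natCast_of_lt (Finset.mem_range.mp hi)
    · intro x _; exact ep_eq_pow p x
  rw [h, geom_sum_eq (zeta_ne_one p hp), zeta_pow p (by omega)]
  simp

private lemma sum_ep_mul (p : ℕ) [Fact p.Prime] (t : ZMod p) :
    ∑ x : ZMod p, ep p (x * t) = if t = 0 then (p : ℂ) else 0 := by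
  have hp := (Fact.out : p.Prime)
  by_cases ht : t = 0
  · simp [ht, ep_zero, Finset.card_univ, ZMod.card]
  · rw [if_neg ht]
    have hbij : Function.Bijective (fun x : ZMod p => x * t) :=
      (Equiv.mulRight₀ t ht).bijective
    rw [← sum_ep p hp.one_lt]
    simpa using (Function.Bijective.sum_comp hbij (fun x => ep p x))

private lemma swap5 {α M : Type*} [AddCommMonoid M] [Fintype α]
    (f : α → α → α → α → α → M) :
    ∑ x : α, ∑ a : α, ∑ b : α, ∑ c : α, ∑ d : α, f x a b c d
      = ∑ a : α, ∑ b : α, ∑ c : α, ∑ d : α, ∑ x : α, f x a b c d := by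
  rw [Finset.sum_comm]
  refine Finset.sum_congr rfl fun a _ => ?_
  rw [Finset.sum_comm]
  refine Finset.sum_congr rfl fun b _ => ?_
  rw [Finset.sum_comm]
  refine Finset.sum_congr rfl fun c _ => ?_
  rw [Finset.sum_comm]

set_option maxHeartbeats 1000000 in
theorem Q1_to_R1 (p : ℕ) [Fact p.Prime] (hodd : Odd p) (x₁ x₂ x₃ : ZMod p) :
    ((p : ℂ) ^ 4)⁻¹ * ∑ x₄ : ZMod p, ∑ y₁ : ZMod p, ∑ y₂ : ZMod p, ∑ y₃ : ZMod p, ∑ y₄ : ZMod p,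
        ep p (x₁ * y₁ ^ 2 + (x₂ + x₄ - x₁) * y₁ - x₂ * y₂ ^ 2 - x₄ * y₂ - x₃ * y₃ ^ 2 -
          (x₂ + x₄ - x₁) * y₃ + (x₃ + x₂ - x₁) * y₄ ^ 2 + x₄ * y₄) =
      ((p : ℂ) ^ 3)⁻¹ * ∑ y₁ : ZMod p, ∑ y₂ : ZMod p, ∑ y₃ : ZMod p,
        ep p (x₁ * y₁ ^ 2 - x₂ * y₂ ^ 2 - x₃ * y₃ ^ 2 +
          (x₃ + x₂ - x₁) * (y₂ + y₃ - y₁) ^ 2 + (x₂ - x₁) * (y₁ - y₃)) := by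
  have hp := (Fact.out : p.Prime)
  have hpC : (p : ℂ) ≠ 0 := Nat.cast_ne_zero.mpr hp.ne_zero
  have key : ∀ y₁ y₂ y₃ : ZMod p,
      ∑ y₄ : ZMod p, ∑ x₄ : ZMod p,
        ep p (x₁ * y₁ ^ 2 + (x₂ + x₄ - x₁) * y₁ - x₂ * y₂ ^ 2 - x₄ * y₂ - x₃ * y₃ ^ 2 -
          (x₂ + x₄ - x₁) * y₃ + (x₃ + x₂ - x₁) * y₄ ^ 2 + x₄ * y₄)
      = (p : ℂ) * ep p (x₁ * y₁ ^ 2 - x₂ * y₂ ^ 2 - x₃ * y₃ ^ 2 +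
          (x₃ + x₂ - x₁) * (y₂ + y₃ - y₁) ^ 2 + (x₂ - x₁) * (y₁ - y₃)) := by
    intro y₁ y₂ y₃
    have step : ∀ y₄ : ZMod p,
        ∑ x₄ : ZMod p,
          ep p (x₁ * y₁ ^ 2 + (x₂ + x₄ - x₁) * y₁ - x₂ * y₂ ^ 2 - x₄ * y₂ - x₃ * y₃ ^ 2 -
            (x₂ + x₄ - x₁) * y₃ + (x₃ + x₂ - x₁) * y₄ ^ 2 + x₄ * y₄)
        = if y₄ = y₂ + y₃ - y₁ then
            (p : ℂ) * ep p (x₁ * y₁ ^ 2 + (x₂ - x₁) * y₁ - x₂ * y₂ ^ 2 - x₃ * y₃ ^ 2 -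
              (x₂ - x₁) * y₃ + (x₃ + x₂ - x₁) * y₄ ^ 2)
          else 0 := by
      intro y₄
      have h1 : ∀ x₄ : ZMod p,
          ep p (x₁ * y₁ ^ 2 + (x₂ + x₄ - x₁) * y₁ - x₂ * y₂ ^ 2 - x₄ * y₂ - x₃ * y₃ ^ 2 -
            (x₂ + x₄ - x₁) * y₃ + (x₃ + x₂ - x₁) * y₄ ^ 2 + x₄ * y₄)
          = ep p (x₁ * y₁ ^ 2 + (x₂ - x₁) * y₁ - x₂ * y₂ ^ 2 - x₃ * y₃ ^ 2 -
              (x₂ - x₁) * y₃ + (x₃ + x₂ - x₁) * y₄ ^ 2)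
            * ep p (x₄ * (y₁ - y₂ - y₃ + y₄)) := by
        intro x₄
        rw [← ep_add]
        congr 1
        ring
      simp only [h1]
      rw [← Finset.mul_sum, sum_ep_mul]
      have heq : (y₁ - y₂ - y₃ + y₄ = 0) ↔ (y₄ = y₂ + y₃ - y₁) := by
        constructor <;> intro h <;> linear_combination h
      by_cases h : y₄ = y₂ + y₃ - y₁
      · rw [if_pos (heq.mpr h), if_pos h]; ring
      · rw [if_neg (fun hh => h (heq.mp hh)), if_neg h, mul_zero]
    simp only [step]
    rw [Finset.sum_ite_eq' Finset.univ (y₂ + y₃ - y₁)]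
    rw [if_pos (Finset.mem_univ _)]
    congr 1
    congr 1
    ring
  rw [swap5 (fun x₄ y₁ y₂ y₃ y₄ =>
    ep p (x₁ * y₁ ^ 2 + (x₂ + x₄ - x₁) * y₁ - x₂ * y₂ ^ 2 - x₄ * y₂ - x₃ * y₃ ^ 2 -
      (x₂ + x₄ - x₁) * y₃ + (x₃ + x₂ - x₁) * y₄ ^ 2 + x₄ * y₄))]
  simp only [key]
  simp only [← Finset.mul_sum]
  field_simp
end

section
/- Let p be an odd prime and f : F_p → ℂ. For the quantity S = ∑_{s₁ ≠ 0} ∑_{n₂ ∈ F_p} f(s₁) conj(f(0)) conj(f(s₁−n₂)) f(−n₂) H₁(s₁, 0, 0, n₂), where H₁(s₁,s₂,n₁,n₂) = K(s₁−n₁,n₁) conj(K(s₁−n₂,n₂)) conj(K(s₂−n₁,n₁)) K(s₂−n₂,n₂) and K(a,b) = (1/p)∑_y e_p(ay²+by), one has |S| ≤ C p^{-1} ‖f‖₂⁴ for an absolute constant C. -/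
open Finset Complex

/-- `‖f‖₂² = ∑_x |f x|²`. -/
noncomputable def nsq (p : ℕ) [NeZero p] (f : ZMod p → ℂ) : ℝ :=
  ∑ x : ZMod p, ‖f x‖ ^ 2

/-- `H₁(s₁,s₂,n₁,n₂) = K(s₁−n₁,n₁) conj(K(s₁−n₂,n₂)) conj(K(s₂−n₁,n₁)) K(s₂−n₂,n₂)`. -/
noncomputable def H1 (p : ℕ) [NeZero p] (s₁ s₂ n₁ n₂ : ZMod p) : ℂ :=
  Kker p (s₁ - n₁) n₁ * (starRingEnd ℂ) (Kker p (s₁ - n₂) n₂) *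
    (starRingEnd ℂ) (Kker p (s₂ - n₁) n₁) * Kker p (s₂ - n₂) n₂

/-!
For `a ≠ 0` the sum `∑_y e_p(a y² + b y)` has absolute value `√p`, so `|K(a,b)| = p^{-1/2}`, while
`K(0,b) = 0` for `b ≠ 0` and `K(0,0) = 1`. Hence for `s₁ ≠ 0`, `|H₁(s₁,0,0,n₂)|` is at most
`p^{-3/2}` when `n₂ ≠ 0` (it vanishes at `n₂ = s₁`) and `p^{-1}` at `n₂ = 0`. With `g = |f|`, the
first part is bounded by `p^{-3/2} g(0) ∑_n g(-n) ∑_s g(s) g(s-n) ≤ p^{-3/2} ‖f‖₂ · √p ‖f‖₂ · ‖f‖₂²`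
(Cauchy–Schwarz twice), the second by `p^{-1} g(0)² ‖f‖₂²`; so `C = 2` works.
-/

/-- Expanding the square and substituting `x = h + y` leaves `∑ h, ψ (Q h) ∑ y, ψ (y * 2ah)`, in
which only `h = 0` survives because `ψ` is primitive and `2a ≠ 0`. -/
theorem AddChar.norm_sum_quadratic_sq {F : Type*} [Field F] [Fintype F] {ψ : AddChar F ℂ}
    (hψ : ψ.IsPrimitive) (hF : ringChar F ≠ 2) {a : F} (ha : a ≠ 0) (b : F) :
    ‖∑ x, ψ (a * x ^ 2 + b * x)‖ ^ 2 = Fintype.card F := by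
  classical
  set Q : F → F := fun x => a * x ^ 2 + b * x
  have hQ (h y : F) : Q (h + y) - Q y = y * (2 * a * h) + Q h := by simp only [Q]; ring
  have h2ah (h : F) : 2 * a * h = 0 ↔ h = 0 := by
    simp [Ring.two_ne_zero hF, ha]
  have key : (∑ x, ψ (Q x)) * starRingEnd ℂ (∑ y, ψ (Q y)) = Fintype.card F :=
    calc (∑ x, ψ (Q x)) * starRingEnd ℂ (∑ y, ψ (Q y))
        = ∑ y, ∑ h, ψ (Q (h + y) - Q y) := by
          simp_rw [map_sum, sum_mul_sum, ← AddChar.map_neg_eq_conj, ← AddChar.map_add_eq_mul,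
            ← sub_eq_add_neg]
          rw [sum_comm]
          exact sum_congr rfl fun y _ => (Equiv.sum_comp (Equiv.addRight y) (ψ <| Q · - Q y)).symm
      _ = ∑ h, ψ (Q h) * ∑ y, ψ (y * (2 * a * h)) := by
          simp_rw [hQ, AddChar.map_add_eq_mul, mul_sum]
          rw [sum_comm]
          exact sum_congr rfl fun _ _ => sum_congr rfl fun _ _ => mul_comm _ _
      _ = Fintype.card F := by
          simp [AddChar.sum_mulShift _ hψ, h2ah, Q]
  rw [← Complex.ofReal_inj, Complex.ofReal_pow, ← Complex.mul_conj', key]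
  simp

section Kker

variable {p : ℕ} [NeZero p]

theorem ep_eq_stdAddChar_neg (x : ZMod p) : ep p x = ZMod.stdAddChar (-x) := by
  rw [AddChar.map_neg_eq_inv, ZMod.stdAddChar_apply, ZMod.toCircle_apply, ← Complex.exp_neg, ep]
  congr 1
  ring

theorem Kker_eq_stdAddChar (a b : ZMod p) :
    Kker p a b = (p : ℂ)⁻¹ * ∑ y, ZMod.stdAddChar (-a * y ^ 2 + -b * y) := by
  simp only [Kker, ep_eq_stdAddChar_neg, neg_add, neg_mul]

theorem Kker_zero_zero : Kker p 0 0 = 1 := by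
  simp [Kker_eq_stdAddChar, ZMod.card, NeZero.ne]

theorem Kker_zero_left {b : ZMod p} (hb : b ≠ 0) : Kker p 0 b = 0 := by
  rw [Kker_eq_stdAddChar, mul_eq_zero]
  right
  simpa [mul_comm, hb] using AddChar.sum_mulShift (-b) (ZMod.isPrimitive_stdAddChar p)

theorem norm_Kker [Fact p.Prime] (hp : p ≠ 2) {a : ZMod p} (ha : a ≠ 0) (b : ZMod p) :
    ‖Kker p a b‖ = (√p)⁻¹ := by
  have hsq := AddChar.norm_sum_quadratic_sq (ZMod.isPrimitive_stdAddChar p)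
    (by rwa [ZMod.ringChar_zmod_n]) (neg_ne_zero.mpr ha) (-b)
  have hnorm : ‖∑ y, ZMod.stdAddChar (-a * y ^ 2 + -b * y)‖ = √p := by
    rw [← Real.sqrt_sq (norm_nonneg _), hsq, ZMod.card]
  rw [Kker_eq_stdAddChar, norm_mul, hnorm, norm_inv, Complex.norm_natCast, inv_mul_eq_div,
    Real.sqrt_div_self', one_div]

theorem norm_H1_le [Fact p.Prime] (hp : p ≠ 2) {s : ZMod p} (hs : s ≠ 0) (n : ZMod p) :
    ‖H1 p s 0 0 n‖ ≤ (p : ℝ)⁻¹ * (√p)⁻¹ + if n = 0 then (p : ℝ)⁻¹ else 0 := by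
  have hp0 : (0 : ℝ) ≤ p := Nat.cast_nonneg p
  have hsqrt : (√p)⁻¹ * (√p)⁻¹ = (p : ℝ)⁻¹ := by rw [← mul_inv, Real.mul_self_sqrt hp0]
  have hnorm : ‖H1 p s 0 0 n‖ = (√p)⁻¹ * ‖Kker p (s - n) n‖ * ‖Kker p (-n) n‖ := by
    simp [H1, Kker_zero_zero, norm_Kker hp hs]
  rw [hnorm]
  rcases eq_or_ne n 0 with rfl | hn
  · simp [Kker_zero_zero, norm_Kker hp hs, hsqrt]
    positivity
  rcases eq_or_ne n s with rfl | hns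
  · simp [Kker_zero_left hn, hn]
    positivity
  rw [norm_Kker hp (sub_ne_zero.mpr hns.symm), norm_Kker hp (neg_ne_zero.mpr hn), if_neg hn,
    add_zero, ← hsqrt]

end Kker

section

variable {G : Type*} [AddCommGroup G] [Fintype G]

theorem sum_mul_comp_sub_le_sum_sq (g : G → ℝ) (n : G) :
    ∑ s, g s * g (s - n) ≤ ∑ s, g s ^ 2 := by
  have hshift : ∑ s, g (s - n) ^ 2 = ∑ s, g s ^ 2 := (Equiv.subRight n).sum_comp (g · ^ 2)
  calc ∑ s, g s * g (s - n) ≤ ∑ s, (g s ^ 2 + g (s - n) ^ 2) / 2 :=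
        sum_le_sum fun s _ => by nlinarith [sq_nonneg (g s - g (s - n))]
    _ = ∑ s, g s ^ 2 := by rw [← sum_div, sum_add_distrib, hshift]; ring

theorem mul_sum_le_sqrt_card_mul_sum_sq {g : G → ℝ} (hg : 0 ≤ g) (c : G) :
    g c * ∑ x, g x ≤ √(Fintype.card G) * ∑ x, g x ^ 2 := by
  have hc : g c ^ 2 ≤ ∑ x, g x ^ 2 := single_le_sum (fun x _ => sq_nonneg (g x)) (mem_univ c)
  have hsum : (∑ x, g x) ^ 2 ≤ Fintype.card G * ∑ x, g x ^ 2 := by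
    simpa only [card_univ] using sq_sum_le_card_mul_sum_sq (s := univ) (f := g)
  refine (pow_le_pow_iff_left₀ (mul_nonneg (hg c) (sum_nonneg fun x _ => hg x))
    (by positivity) two_ne_zero).1 ?_
  calc (g c * ∑ x, g x) ^ 2 = g c ^ 2 * (∑ x, g x) ^ 2 := mul_pow _ _ _
    _ ≤ (∑ x, g x ^ 2) * (Fintype.card G * ∑ x, g x ^ 2) :=
        mul_le_mul hc hsum (sq_nonneg _) (sum_nonneg fun x _ => sq_nonneg (g x))
    _ = (√(Fintype.card G) * ∑ x, g x ^ 2) ^ 2 := by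
        rw [mul_pow, Real.sq_sqrt (Nat.cast_nonneg _)]
        ring

theorem sum_sum_mul_sub_mul_neg_le {g : G → ℝ} (hg : 0 ≤ g) (c : G) :
    ∑ s, ∑ n, g s * g c * g (s - n) * g (-n) ≤ √(Fintype.card G) * (∑ x, g x ^ 2) ^ 2 := by
  set N := ∑ x, g x ^ 2
  calc ∑ s, ∑ n, g s * g c * g (s - n) * g (-n)
      = ∑ n, g c * g (-n) * ∑ s, g s * g (s - n) := by
        rw [sum_comm]
        simp_rw [mul_sum]
        exact sum_congr rfl fun _ _ => sum_congr rfl fun _ _ => by ring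
    _ ≤ ∑ n, g c * g (-n) * N :=
        sum_le_sum fun n _ => mul_le_mul_of_nonneg_left (sum_mul_comp_sub_le_sum_sq g n)
          (mul_nonneg (hg c) (hg (-n)))
    _ = (g c * ∑ x, g x) * N := by
        rw [← sum_mul, ← mul_sum, ← Equiv.sum_comp (Equiv.neg G) g]
        rfl
    _ ≤ (√(Fintype.card G) * N) * N :=
        mul_le_mul_of_nonneg_right (mul_sum_le_sqrt_card_mul_sum_sq hg c)
          (sum_nonneg fun x _ => sq_nonneg (g x))
    _ = √(Fintype.card G) * N ^ 2 := by ring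

theorem sum_sum_mul_sub_mul_neg_weighted_le [DecidableEq G] {g : G → ℝ} (hg : 0 ≤ g) {A B : ℝ}
    (hA : 0 ≤ A) (hB : 0 ≤ B) :
    ∑ s, ∑ n, g s * g 0 * g (s - n) * g (-n) * (A + if n = 0 then B else 0)
      ≤ (A * √(Fintype.card G) + B) * (∑ x, g x ^ 2) ^ 2 := by
  set N := ∑ x, g x ^ 2
  have h0 : g 0 ^ 2 ≤ N := single_le_sum (fun x _ => sq_nonneg (g x)) (mem_univ 0)
  calc _ = ∑ s, (A * ∑ n, g s * g 0 * g (s - n) * g (-n) + B * (g 0 ^ 2 * g s ^ 2)) :=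
        sum_congr rfl fun s _ => by
          simp only [mul_add, mul_ite, mul_zero, sum_add_distrib, sum_ite_eq', mem_univ, if_true,
            sub_zero, neg_zero, ← sum_mul]
          ring
    _ = A * ∑ s, ∑ n, g s * g 0 * g (s - n) * g (-n) + B * (g 0 ^ 2 * N) := by
        rw [sum_add_distrib, ← mul_sum, ← mul_sum, ← mul_sum]
    _ ≤ A * (√(Fintype.card G) * N ^ 2) + B * (N * N) := by
        gcongr
        exact sum_sum_mul_sub_mul_neg_le hg 0
    _ = (A * √(Fintype.card G) + B) * N ^ 2 := by ring

end

theorem side_term_bound :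
    ∃ C : ℝ, 0 < C ∧ ∀ p : ℕ, ∀ _ : Fact p.Prime, Odd p → ∀ f : ZMod p → ℂ,
      ‖∑ s₁ ∈ Finset.univ.filter (fun s₁ : ZMod p => s₁ ≠ 0), ∑ n₂ : ZMod p,
          f s₁ * (starRingEnd ℂ) (f 0) * (starRingEnd ℂ) (f (s₁ - n₂)) * f (-n₂) *
            H1 p s₁ 0 0 n₂‖
        ≤ C * (p : ℝ)⁻¹ * nsq p f ^ 2 := by
  refine ⟨2, two_pos, fun p _ hodd f => ?_⟩
  have hp : p ≠ 2 := by rintro rfl; exact absurd hodd (by decide)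
  set g : ZMod p → ℝ := fun x => ‖f x‖
  have hg : 0 ≤ g := fun x => norm_nonneg _
  have hterm (s n : ZMod p) :
      ‖f s * (starRingEnd ℂ) (f 0) * (starRingEnd ℂ) (f (s - n)) * f (-n)‖ =
        g s * g 0 * g (s - n) * g (-n) := by
    simp [g]
  have hweight : (p : ℝ)⁻¹ * (√p)⁻¹ * √(Fintype.card (ZMod p)) + (p : ℝ)⁻¹ = 2 * (p : ℝ)⁻¹ := by
    have : √(p : ℝ) ≠ 0 := Real.sqrt_ne_zero'.2 (Nat.cast_pos.2 (Fact.out : p.Prime).pos)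
    rw [ZMod.card, inv_mul_cancel_right₀ this]
    ring
  calc _ ≤ ∑ s ∈ univ.filter (fun s : ZMod p => s ≠ 0), ∑ n, g s * g 0 * g (s - n) * g (-n) *
          ((p : ℝ)⁻¹ * (√p)⁻¹ + if n = 0 then (p : ℝ)⁻¹ else 0) :=
        (norm_sum_le _ _).trans <| sum_le_sum fun s hs => (norm_sum_le _ _).trans <|
          sum_le_sum fun n _ => by
            rw [norm_mul, hterm]
            exact mul_le_mul_of_nonneg_left (norm_H1_le hp (mem_filter.1 hs).2 n) (by positivity)
    _ ≤ ∑ s, ∑ n, g s * g 0 * g (s - n) * g (-n) *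
          ((p : ℝ)⁻¹ * (√p)⁻¹ + if n = 0 then (p : ℝ)⁻¹ else 0) :=
        sum_le_univ_sum_of_nonneg fun s => sum_nonneg fun n _ => by positivity
    _ ≤ 2 * (p : ℝ)⁻¹ * nsq p f ^ 2 := by
        rw [← hweight]
        exact sum_sum_mul_sub_mul_neg_weighted_le hg (by positivity) (by positivity)
end
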